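/- With A the matrix from the difference identity for F, if |Δ₊/ε| <= 1 and |Δ₋/ε| <= 1, then every diagonal entry of A satisfies e_iᵀ A e_i >= 1/(2√2). -/

import Mathlib

/-- Euclidean norm on `Fin k → ℝ`. -/
noncomputable def enorm' {k : ℕ} (v : Fin k → ℝ) : ℝ := Real.sqrt (∑ i, v i ^ 2)

/-!
Write `x = Δ₊/ε`, `y = Δ₋/(-ε)`, so that `d = (x + y)/2` and `s₊² = 1 + |x|² ≥ 1 + xᵢ²`,
`s₋² = 1 + |y|² ≥ 1 + yᵢ²`. By Cauchy–Schwarz in `ℝ²`, `s₊ s₋ ≥ 1 + xᵢ yᵢ`, and expanding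
`((s₊ + s₋)/2)² - dᵢ²` then shows that the numerator of `Aᵢᵢ` is at least `1`. The norm bounds
give `0 < s± ≤ √2`, so the denominator `s₊ s₋ (s₊ + s₋)/2` is at most `√2³ = 2√2`.
-/

lemma enorm'_sq {k : ℕ} (v : Fin k → ℝ) : enorm' v ^ 2 = ∑ i, v i ^ 2 :=
  Real.sq_sqrt (Finset.sum_nonneg fun _ _ => sq_nonneg _)

lemma sq_apply_le_enorm'_sq {k : ℕ} (v : Fin k → ℝ) (i : Fin k) : v i ^ 2 ≤ enorm' v ^ 2 := by
  rw [enorm'_sq]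
  exact Finset.single_le_sum (fun j _ => sq_nonneg (v j)) (Finset.mem_univ i)

lemma one_add_mul_le_mul_of_one_add_sq_le_sq {u v p q : ℝ} (hp : 0 ≤ p) (hq : 0 ≤ q)
    (hu : 1 + u ^ 2 ≤ p ^ 2) (hv : 1 + v ^ 2 ≤ q ^ 2) : 1 + u * v ≤ p * q := by
  have hsq : (1 + u * v) ^ 2 ≤ (p * q) ^ 2 :=
    calc (1 + u * v) ^ 2 ≤ (1 + u ^ 2) * (1 + v ^ 2) := by nlinarith [sq_nonneg (u - v)]
      _ ≤ p ^ 2 * q ^ 2 := mul_le_mul hu hv (by positivity) (sq_nonneg p)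
      _ = (p * q) ^ 2 := by ring
  exact (le_abs_self _).trans (abs_le_of_sq_le_sq hsq (mul_nonneg hp hq))

lemma one_le_sq_half_add_sub_sq_half_add {u v p q : ℝ} (hp : 0 ≤ p) (hq : 0 ≤ q)
    (hu : 1 + u ^ 2 ≤ p ^ 2) (hv : 1 + v ^ 2 ≤ q ^ 2) :
    1 ≤ ((p + q) / 2) ^ 2 - ((u + v) / 2) ^ 2 := by
  nlinarith [one_add_mul_le_mul_of_one_add_sq_le_sq hp hq hu hv]

lemma mul_mul_half_add_le_pow_three {p q r : ℝ} (hp : 0 ≤ p) (hq : 0 ≤ q)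
    (hpr : p ≤ r) (hqr : q ≤ r) : p * q * ((p + q) / 2) ≤ r ^ 3 := by
  have hr : 0 ≤ r := hp.trans hpr
  calc p * q * ((p + q) / 2) ≤ r * r * r := by gcongr; linarith
    _ = r ^ 3 := by ring

lemma smul_sub_vecMulVec_apply_self {n : Type*} [DecidableEq n] (c s : ℝ) (d : n → ℝ) (i : n) :
    (c • (s • (1 : Matrix n n ℝ) - Matrix.vecMulVec d d)) i i = c * (s - d i ^ 2) := by
  simp [Matrix.vecMulVec_apply, sq]

lemma sqrt_one_add_sq_mem_Ioc {a : ℝ} (ha₀ : 0 ≤ a) (ha₁ : a ≤ 1) :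
    Real.sqrt (1 + a ^ 2) ∈ Set.Ioc 0 (Real.sqrt 2) :=
  ⟨Real.sqrt_pos.2 (by positivity), Real.sqrt_le_sqrt (by nlinarith)⟩

theorem stmt4_general (m : ℕ) (ε : ℝ) (Δp Δm : Fin m → ℝ) :
    let sp := Real.sqrt (1 + enorm' (ε⁻¹ • Δp) ^ 2)
    let sm := Real.sqrt (1 + enorm' ((-ε)⁻¹ • Δm) ^ 2)
    let d : Fin m → ℝ := (2 * ε)⁻¹ • (Δp - Δm)
    let A : Matrix (Fin m) (Fin m) ℝ :=
      (sp * sm * ((sp + sm) / 2))⁻¹ •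
        (((sp + sm) / 2) ^ 2 • (1 : Matrix (Fin m) (Fin m) ℝ) - Matrix.vecMulVec d d)
    enorm' (ε⁻¹ • Δp) ≤ 1 → enorm' ((-ε)⁻¹ • Δm) ≤ 1 →
      ∀ i : Fin m, A i i ≥ 1 / (2 * Real.sqrt 2) := by
  intro sp sm d A hx hy i
  set x := ε⁻¹ • Δp
  set y := (-ε)⁻¹ • Δm
  obtain ⟨hsp₀, hsp₂⟩ : 0 < sp ∧ sp ≤ Real.sqrt 2 :=
    sqrt_one_add_sq_mem_Ioc (Real.sqrt_nonneg _) hx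
  obtain ⟨hsm₀, hsm₂⟩ : 0 < sm ∧ sm ≤ Real.sqrt 2 :=
    sqrt_one_add_sq_mem_Ioc (Real.sqrt_nonneg _) hy
  have hsp : sp ^ 2 = 1 + enorm' x ^ 2 := Real.sq_sqrt (by positivity)
  have hsm : sm ^ 2 = 1 + enorm' y ^ 2 := Real.sq_sqrt (by positivity)
  have hd : d i = (x i + y i) / 2 := by
    simp only [d, x, y, Pi.smul_apply, Pi.sub_apply, smul_eq_mul, inv_neg, mul_inv]
    ring
  have hnum : 1 ≤ ((sp + sm) / 2) ^ 2 - d i ^ 2 := hd ▸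
    one_le_sq_half_add_sub_sq_half_add hsp₀.le hsm₀.le
      (hsp ▸ by linarith [sq_apply_le_enorm'_sq x i])
      (hsm ▸ by linarith [sq_apply_le_enorm'_sq y i])
  have hden₀ : 0 < sp * sm * ((sp + sm) / 2) := by positivity
  have hden : sp * sm * ((sp + sm) / 2) ≤ 2 * Real.sqrt 2 := by
    have h := mul_mul_half_add_le_pow_three hsp₀.le hsm₀.le hsp₂ hsm₂
    rwa [pow_succ, Real.sq_sqrt zero_le_two] at h
  rw [ge_iff_le, show A i i = _ from smul_sub_vecMulVec_apply_self _ _ d i]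
  calc 1 / (2 * Real.sqrt 2) ≤ 1 / (sp * sm * ((sp + sm) / 2)) :=
        one_div_le_one_div_of_le hden₀ hden
    _ = (sp * sm * ((sp + sm) / 2))⁻¹ * 1 := by ring
    _ ≤ _ := mul_le_mul_of_nonneg_left hnum (inv_nonneg.2 hden₀.le)

theorem stmt4 (m : ℕ) (ε : ℝ) (hε : ε ≠ 0) (Δp Δm : Fin m → ℝ) :
    let sp := Real.sqrt (1 + enorm' (ε⁻¹ • Δp) ^ 2)
    let sm := Real.sqrt (1 + enorm' ((-ε)⁻¹ • Δm) ^ 2)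
    let d : Fin m → ℝ := (2 * ε)⁻¹ • (Δp - Δm)
    let A : Matrix (Fin m) (Fin m) ℝ :=
      (sp * sm * ((sp + sm) / 2))⁻¹ •
        (((sp + sm) / 2) ^ 2 • (1 : Matrix (Fin m) (Fin m) ℝ) - Matrix.vecMulVec d d)
    enorm' (ε⁻¹ • Δp) ≤ 1 → enorm' ((-ε)⁻¹ • Δm) ≤ 1 →
      ∀ i : Fin m, A i i ≥ 1 / (2 * Real.sqrt 2) :=
  stmt4_general m ε Δp Δm
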